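/- In the free associative algebra on generators x_{12}, x_{13}, x_{23}, consider the two-sided ideal J generated by x_{12}², x_{13}², x_{23}², x_{12}x_{13} + x_{23}x_{12} + x_{13}x_{23}, and x_{13}x_{12} + x_{12}x_{23} + x_{23}x_{13}. In the quotient algebra B = T/J (the 12-dimensional Fomin–Kirillov algebra FK_3), the element x_top = x_{12}x_{13}x_{12}x_{23} satisfies x_{12}·x_top = x_{13}·x_top = x_{23}·x_top = 0 and x_top·x_{12} = x_top·x_{13} = x_top·x_{23} = 0. -/
import Mathlib


/-- The defining relations of the 12-dimensional Fomin–Kirillov algebra `FK₃`, read in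
the free algebra on `x₁₂, x₁₃, x₂₃` (here indexed `0 ↦ x₁₂`, `1 ↦ x₁₃`, `2 ↦ x₂₃`). -/
inductive FKRel (k : Type) [Field k] :
    FreeAlgebra k (Fin 3) → FreeAlgebra k (Fin 3) → Prop
  | sq (i : Fin 3) : FKRel k (FreeAlgebra.ι k i * FreeAlgebra.ι k i) 0
  | rel1 : FKRel k
      (FreeAlgebra.ι k 0 * FreeAlgebra.ι k 1 + FreeAlgebra.ι k 2 * FreeAlgebra.ι k 0 +
        FreeAlgebra.ι k 1 * FreeAlgebra.ι k 2) 0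
  | rel2 : FKRel k
      (FreeAlgebra.ι k 1 * FreeAlgebra.ι k 0 + FreeAlgebra.ι k 0 * FreeAlgebra.ι k 2 +
        FreeAlgebra.ι k 2 * FreeAlgebra.ι k 1) 0

lemma fk_aux {R : Type*} [Ring R] (a b c : R)
    (ha : a * a = 0) (hb : b * b = 0) (hc : c * c = 0)
    (r1 : a * b + c * a + b * c = 0) (r2 : b * a + a * c + c * b = 0) :
    a * (a * b * a * c) = 0 ∧ b * (a * b * a * c) = 0 ∧ c * (a * b * a * c) = 0 ∧
    (a * b * a * c) * a = 0 ∧ (a * b * a * c) * b = 0 ∧ (a * b * a * c) * c = 0 := by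
  have hbab : b * a * b = a * b * a := by
    have h : b * a * b - a * b * a =
        (b * a + a * c + c * b) * b - a * (b * a + a * c + c * b)
          - c * (b * b) + (a * a) * c := by noncomm_ring
    rw [r2, ha, hb] at h
    simpa [sub_eq_zero] using h
  have hcab : c * a * b - b * a * c = 0 := by
    have h : c * a * b - b * a * c =
        c * (a * b + c * a + b * c) - (b * a + a * c + c * b) * c
          - (c * c) * a + a * (c * c) := by noncomm_ring
    rw [r1, r2, hc] at h
    simpa using h
  have haca : a * c * a + a * b * c = 0 := by
    have h : a * c * a + a * b * c = a * (a * b + c * a + b * c) - (a * a) * b := by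
      noncomm_ring
    rw [r1, ha] at h
    simpa using h
  have hacb : a * c * b + a * b * a = 0 := by
    have h : a * c * b + a * b * a = a * (b * a + a * c + c * b) - (a * a) * c := by
      noncomm_ring
    rw [r2, ha] at h
    simpa using h
  have hcac : c * a * c + a * b * c = 0 := by
    have h : c * a * c + a * b * c = (a * b + c * a + b * c) * c - b * (c * c) := by
      noncomm_ring
    rw [r1, hc] at h
    simpa using h
  refine ⟨?_, ?_, ?_, ?_, ?_, ?_⟩
  · rw [show a * (a * b * a * c) = (a * a) * (b * a * c) from by noncomm_ring, ha]
    simp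
  · rw [show b * (a * b * a * c) = (b * a * b) * (a * c) from by noncomm_ring, hbab,
      show (a * b * a) * (a * c) = (a * b) * ((a * a) * c) from by noncomm_ring, ha]
    simp
  · rw [show c * (a * b * a * c) = (c * a * b - b * a * c) * (a * c)
        + (b * a) * (c * a * c + a * b * c) - b * ((a * a) * (b * c)) from by noncomm_ring,
      hcab, hcac, ha]
    simp
  · rw [show (a * b * a * c) * a = -(a * (b * a * b) * c)
        + (a * b) * (a * c * a + a * b * c) from by noncomm_ring,
      haca, hbab,
      show a * (a * b * a) * c = (a * a) * (b * a * c) from by noncomm_ring, ha]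
    simp
  · rw [show (a * b * a * c) * b = (a * b) * (a * c * b + a * b * a)
        - a * (b * a * b) * a from by noncomm_ring,
      hacb, hbab,
      show a * (a * b * a) * a = (a * a) * (b * (a * a)) from by noncomm_ring, ha]
    simp
  · rw [show (a * b * a * c) * c = (a * b * a) * (c * c) from by noncomm_ring, hc]
    simp

/-- In the 12-dimensional Fomin–Kirillov algebra `B = T/J`, the top-degree element
`x_top = x₁₂x₁₃x₁₂x₂₃` is annihilated by left and right multiplication by each
generator. -/
theorem stmt_16 (k : Type) [Field k] :
    let x : Fin 3 → RingQuot (FKRel k) :=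
      fun i => RingQuot.mkRingHom (FKRel k) (FreeAlgebra.ι k i)
    let xtop := x 0 * x 1 * x 0 * x 2
    (∀ i : Fin 3, x i * xtop = 0) ∧ (∀ i : Fin 3, xtop * x i = 0) := by
  intro x xtop
  have ha : x 0 * x 0 = 0 := by
    simpa using RingQuot.mkRingHom_rel (FKRel.sq (k := k) 0)
  have hb : x 1 * x 1 = 0 := by
    simpa using RingQuot.mkRingHom_rel (FKRel.sq (k := k) 1)
  have hc : x 2 * x 2 = 0 := by
    simpa using RingQuot.mkRingHom_rel (FKRel.sq (k := k) 2)
  have r1 : x 0 * x 1 + x 2 * x 0 + x 1 * x 2 = 0 := by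
    simpa using RingQuot.mkRingHom_rel (FKRel.rel1 (k := k))
  have r2 : x 1 * x 0 + x 0 * x 2 + x 2 * x 1 = 0 := by
    simpa using RingQuot.mkRingHom_rel (FKRel.rel2 (k := k))
  obtain ⟨h1, h2, h3, h4, h5, h6⟩ := fk_aux (x 0) (x 1) (x 2) ha hb hc r1 r2
  constructor <;> intro i <;> fin_cases i
  · exact h1
  · exact h2
  · exact h3
  · exact h4
  · exact h5
  · exact h6
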